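/- arXiv:1104.4428 — 4 statements merged into one kernel-verified Lean document; each statement's English description precedes it below -/
import Mathlib

section
/- Let S_λ be a weighted shift on a directed tree T = (V,E) with weights {λ_v}_{v∈V°}. Then S_λ is a bounded operator defined on all of ℓ²(V) if and only if α := sup_{u∈V} Σ_{v child of u} |λ_v|² < ∞; moreover, in that case ‖S_λ‖² = α. -/
/-!
Grouping the vertices of `V°` by their parents gives
`‖S_λ f‖² = ∑_u |f(u)|² ∑_{v ∈ Chi(u)} |λ_v|²` in `[0, ∞]` for every `f ∈ ℓ²(V)`. Hence
`‖S_λ f‖² ≤ α ‖f‖²`, so `α < ∞` makes `S_λ` everywhere defined with norm at most `√α`;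
conversely `‖S_λ e_u‖² = ∑_{v ∈ Chi(u)} |λ_v|²` shows that any bound `C` satisfies `α ≤ C²`.
-/

open scoped ENNReal ComplexConjugate Classical

/-- A directed tree: a connected directed graph with no (directed) circuits in which
every vertex has at most one parent and at most one vertex has no parent (the root). -/
structure DirectedTree (V : Type*) where
  E : V → V → Prop
  parent_unique : ∀ ⦃u₁ u₂ v : V⦄, E u₁ v → E u₂ v → u₁ = u₂
  no_circuit : ∀ v : V, ¬ Relation.TransGen E v v
  connected : ∀ u v : V, Relation.ReflTransGen (fun a b => E a b ∨ E b a) u v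
  root_unique : ∀ ⦃r₁ r₂ : V⦄, (∀ u, ¬ E u r₁) → (∀ u, ¬ E u r₂) → r₁ = r₂

namespace DirectedTree

variable {V : Type*} (T : DirectedTree V)

/-- `v ∈ V°`, i.e. `v` is not a root. -/
def HasParent (v : V) : Prop := ∃ u, T.E u v

/-- The parent partial map (junk value `v` itself at a root). -/
noncomputable def par (v : V) : V := if h : T.HasParent v then h.choose else v

theorem par_spec {v : V} (h : T.HasParent v) : T.E (T.par v) v := by
  rw [par, dif_pos h]; exact h.choose_spec

/-- the child set of a vertex -/
def chi (u : V) : Set V := {v | T.E u v}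

/-- the child set of a set of vertices -/
def chiSet (W : Set V) : Set V := {v | ∃ u ∈ W, T.E u v}

/-- the iterated child set `Chi^n(u)` -/
def chiN (n : ℕ) (u : V) : Set V := (T.chiSet)^[n] {u}

/-- the set of descendants of a vertex -/
def des (u : V) : Set V := ⋃ n : ℕ, T.chiN n u

/-- the iterated parent partial map, as an `Option`-valued map -/
noncomputable def parN : ℕ → V → Option V
  | 0, v => some v
  | n + 1, v => if T.HasParent v then parN n (T.par v) else none

end DirectedTree

/-- the Hilbert space `ℓ²(V)` -/
abbrev l2 (V : Type*) : Type _ := lp (fun _ : V => ℂ) 2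

/-- the canonical orthonormal basis vector `e_u` of `ℓ²(V)` -/
noncomputable def evec {V : Type*} (u : V) : l2 V := lp.single 2 u 1

variable {V : Type*}

/-- the formal action `Λ_T` of a weighted shift with weights `lam` -/
noncomputable def lamMap (T : DirectedTree V) (lam : V → ℂ) (f : V → ℂ) : V → ℂ :=
  fun v => if T.HasParent v then lam v * f (T.par v) else 0

theorem lamMap_add (T : DirectedTree V) (lam : V → ℂ) (f g : V → ℂ) :
    lamMap T lam (f + g) = lamMap T lam f + lamMap T lam g := by
  funext v
  simp only [lamMap, Pi.add_apply]
  split_ifs <;> ring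

theorem lamMap_smul (T : DirectedTree V) (lam : V → ℂ) (c : ℂ) (f : V → ℂ) :
    lamMap T lam (c • f) = c • lamMap T lam f := by
  funext v
  simp only [lamMap, Pi.smul_apply, smul_eq_mul]
  split_ifs <;> ring

/-- the (maximal) domain of the weighted shift `S_lam` -/
noncomputable def shiftDomain (T : DirectedTree V) (lam : V → ℂ) : Submodule ℂ (l2 V) where
  carrier := {f : l2 V | Memℓp (lamMap T lam ⇑f) 2}
  zero_mem' := by
    have : lamMap T lam ⇑(0 : l2 V) = 0 := by
      funext v; simp [lamMap]
    simp only [Set.mem_setOf_eq, this]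
    exact zero_memℓp
  add_mem' := by
    intro f g hf hg
    have h : lamMap T lam ⇑(f + g) = lamMap T lam ⇑f + lamMap T lam ⇑g := by
      rw [lp.coeFn_add]; exact lamMap_add T lam _ _
    simp only [Set.mem_setOf_eq, h]
    exact hf.add hg
  smul_mem' := by
    intro c f hf
    have h : lamMap T lam ⇑(c • f) = c • lamMap T lam ⇑f := by
      rw [lp.coeFn_smul]; exact lamMap_smul T lam _ _
    simp only [Set.mem_setOf_eq, h]
    exact hf.const_smul c

/-- the weighted shift `S_lam` on the directed tree `T`, as an unbounded operator in `ℓ²(V)` -/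
noncomputable def shift (T : DirectedTree V) (lam : V → ℂ) : l2 V →ₗ.[ℂ] l2 V where
  domain := shiftDomain T lam
  toFun :=
    { toFun := fun f => ⟨lamMap T lam ⇑(f : l2 V), f.2⟩
      map_add' := by
        intro f g
        apply Subtype.ext
        exact lamMap_add T lam _ _
      map_smul' := by
        intro c f
        apply Subtype.ext
        exact lamMap_smul T lam _ _ }

/-- A densely defined operator `A` is formally normal if `dom A ⊆ dom A*` and
`‖A* h‖ = ‖A h‖` for all `h ∈ dom A`. -/
def FormallyNormal {H : Type*} [NormedAddCommGroup H] [InnerProductSpace ℂ H]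
    [CompleteSpace H] (A : H →ₗ.[ℂ] H) : Prop :=
  Dense (A.domain : Set H) ∧ A.domain ≤ A.adjoint.domain ∧
    ∀ (f : H) (hf : f ∈ A.domain) (hf' : f ∈ A.adjoint.domain),
      ‖A.adjoint ⟨f, hf'⟩‖ = ‖A ⟨f, hf⟩‖

/-- A densely defined operator `A` is normal if `dom A = dom A*` and
`‖A* h‖ = ‖A h‖` for all `h ∈ dom A` (such an operator is automatically closed). -/
def IsNormalOp {H : Type*} [NormedAddCommGroup H] [InnerProductSpace ℂ H]
    [CompleteSpace H] (A : H →ₗ.[ℂ] H) : Prop :=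
  Dense (A.domain : Set H) ∧ A.domain = A.adjoint.domain ∧
    ∀ (f : H) (hf : f ∈ A.domain) (hf' : f ∈ A.adjoint.domain),
      ‖A.adjoint ⟨f, hf'⟩‖ = ‖A ⟨f, hf⟩‖

section L2

variable {ι : Type*} {E : ι → Type*} [∀ i, NormedAddCommGroup (E i)]

theorem memℓp_two_iff_tsum_nnnorm_sq_ne_top {f : ∀ i, E i} :
    Memℓp f 2 ↔ ∑' i, (‖f i‖₊ : ℝ≥0∞) ^ 2 ≠ ⊤ := by
  simp only [memℓp_gen_iff (p := 2) (by norm_num), ENNReal.toReal_ofNat, Real.rpow_two,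
    ← ENNReal.coe_pow, ENNReal.tsum_coe_ne_top_iff_summable, ← NNReal.summable_coe,
    NNReal.coe_pow, coe_nnnorm]

theorem lp.norm_sq_eq_toReal_tsum (f : lp E 2) :
    ‖f‖ ^ 2 = (∑' i, (‖f i‖₊ : ℝ≥0∞) ^ 2).toReal := by
  have h := lp.norm_rpow_eq_tsum (p := 2) (by norm_num) f
  simp only [ENNReal.toReal_ofNat, Real.rpow_two] at h
  rw [h, ENNReal.tsum_toReal_eq fun i => by simp]
  simp

theorem lp.tsum_nnnorm_sq_ne_top (f : lp E 2) : ∑' i, (‖f i‖₊ : ℝ≥0∞) ^ 2 ≠ ⊤ :=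
  memℓp_two_iff_tsum_nnnorm_sq_ne_top.1 f.2

end L2

namespace DirectedTree

variable {V : Type*} (T : DirectedTree V)

theorem par_eq_of_E {u v : V} (h : T.E u v) : T.par v = u :=
  T.parent_unique (T.par_spec ⟨u, h⟩) h

noncomputable def sigmaChiEquiv : (Σ u : V, T.chi u) ≃ {v : V // T.HasParent v} where
  toFun p := ⟨p.2, p.1, p.2.2⟩
  invFun v := ⟨T.par v, v, T.par_spec v.2⟩
  left_inv := by
    rintro ⟨u, v, h⟩
    obtain rfl := T.par_eq_of_E h
    rfl
  right_inv _ := rfl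

theorem tsum_tsum_chi (g : V → ℝ≥0∞) :
    ∑' u, ∑' v : T.chi u, g v = ∑' v : {v : V // T.HasParent v}, g v := by
  rw [← ENNReal.tsum_sigma (fun u (v : T.chi u) => g v)]
  exact T.sigmaChiEquiv.tsum_eq (fun v => g v)

noncomputable def childWeight (lam : V → ℂ) (u : V) : ℝ≥0∞ :=
  ∑' v : T.chi u, (‖lam v‖₊ : ℝ≥0∞) ^ 2

end DirectedTree

section lamMap

variable (T : DirectedTree V) (lam : V → ℂ)

theorem lamMap_of_E (f : V → ℂ) {u v : V} (h : T.E u v) : lamMap T lam f v = lam v * f u := by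
  rw [lamMap, if_pos ⟨u, h⟩, T.par_eq_of_E h]

theorem tsum_nnnorm_sq_lamMap (f : V → ℂ) :
    ∑' v, (‖lamMap T lam f v‖₊ : ℝ≥0∞) ^ 2 =
      ∑' u, (‖f u‖₊ : ℝ≥0∞) ^ 2 * T.childWeight lam u := by
  have hchild (u : V) : (‖f u‖₊ : ℝ≥0∞) ^ 2 * T.childWeight lam u =
      ∑' v : T.chi u, (‖lamMap T lam f v‖₊ : ℝ≥0∞) ^ 2 := by
    rw [DirectedTree.childWeight, ← ENNReal.tsum_mul_left]
    refine tsum_congr fun v => ?_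
    rw [lamMap_of_E T lam f v.2, nnnorm_mul]
    push_cast
    ring
  have hroot : Function.support (fun v => (‖lamMap T lam f v‖₊ : ℝ≥0∞) ^ 2) ⊆
      {v | T.HasParent v} :=
    Function.support_subset_iff'.2 fun v hv => by simp [lamMap, show ¬T.HasParent v from hv]
  rw [tsum_congr hchild, T.tsum_tsum_chi fun v => (‖lamMap T lam f v‖₊ : ℝ≥0∞) ^ 2]
  exact (tsum_subtype_eq_of_support_subset hroot).symm

theorem tsum_nnnorm_sq_lamMap_le (f : V → ℂ) :
    ∑' v, (‖lamMap T lam f v‖₊ : ℝ≥0∞) ^ 2 ≤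
      (⨆ u, T.childWeight lam u) * ∑' u, (‖f u‖₊ : ℝ≥0∞) ^ 2 := by
  rw [tsum_nnnorm_sq_lamMap, mul_comm (⨆ u, _), ← ENNReal.tsum_mul_right]
  gcongr with u
  exact le_iSup _ u

theorem tsum_nnnorm_sq_lamMap_evec (u : V) :
    ∑' v, (‖lamMap T lam (evec u : l2 V) v‖₊ : ℝ≥0∞) ^ 2 = T.childWeight lam u := by
  rw [tsum_nnnorm_sq_lamMap, tsum_eq_single u fun w hw => by simp [evec, hw]]
  simp [evec]

end lamMap

section shift

variable (T : DirectedTree V) (lam : V → ℂ)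

theorem mem_shift_domain_iff (f : l2 V) :
    f ∈ (shift T lam).domain ↔ ∑' v, (‖lamMap T lam f v‖₊ : ℝ≥0∞) ^ 2 ≠ ⊤ :=
  memℓp_two_iff_tsum_nnnorm_sq_ne_top

theorem norm_shift_sq (f : (shift T lam).domain) :
    ‖shift T lam f‖ ^ 2 = (∑' v, (‖lamMap T lam (f : l2 V) v‖₊ : ℝ≥0∞) ^ 2).toReal :=
  lp.norm_sq_eq_toReal_tsum _

theorem shift_domain_eq_top (h : ⨆ u, T.childWeight lam u < ⊤) :
    (shift T lam).domain = ⊤ := by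
  refine Submodule.eq_top_iff'.2 fun f => (mem_shift_domain_iff T lam f).2 ?_
  refine ne_top_of_le_ne_top ?_ (tsum_nnnorm_sq_lamMap_le T lam f)
  exact ENNReal.mul_ne_top h.ne (lp.tsum_nnnorm_sq_ne_top f)

theorem norm_shift_le (h : ⨆ u, T.childWeight lam u < ⊤) (f : (shift T lam).domain) :
    ‖shift T lam f‖ ≤ √(⨆ u, T.childWeight lam u).toReal * ‖(f : l2 V)‖ := by
  refine le_of_sq_le_sq ?_ (by positivity)
  rw [mul_pow, Real.sq_sqrt ENNReal.toReal_nonneg, norm_shift_sq, lp.norm_sq_eq_toReal_tsum,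
    ← ENNReal.toReal_mul]
  exact ENNReal.toReal_mono (ENNReal.mul_ne_top h.ne (lp.tsum_nnnorm_sq_ne_top (f : l2 V)))
    (tsum_nnnorm_sq_lamMap_le T lam _)

theorem iSup_childWeight_le_of_norm_shift_le (hdom : (shift T lam).domain = ⊤) {C : ℝ}
    (hC : ∀ f : (shift T lam).domain, ‖shift T lam f‖ ≤ C * ‖(f : l2 V)‖) :
    ⨆ u, T.childWeight lam u ≤ ENNReal.ofReal (C ^ 2) := by
  refine iSup_le fun u => ?_
  have hu : evec u ∈ (shift T lam).domain := hdom ▸ Submodule.mem_top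
  have hfin : T.childWeight lam u ≠ ⊤ :=
    tsum_nnnorm_sq_lamMap_evec T lam u ▸ (mem_shift_domain_iff T lam _).1 hu
  have hnorm : ‖shift T lam ⟨evec u, hu⟩‖ ≤ C := by
    simpa [evec, lp.norm_single] using hC ⟨evec u, hu⟩
  rw [ENNReal.le_ofReal_iff_toReal_le hfin (sq_nonneg C),
    ← tsum_nnnorm_sq_lamMap_evec T lam u, ← norm_shift_sq T lam ⟨evec u, hu⟩]
  exact pow_le_pow_left₀ (norm_nonneg _) hnorm 2

def shiftBounds : Set ℝ :=
  {C : ℝ | 0 ≤ C ∧ ∀ f : (shift T lam).domain, ‖shift T lam f‖ ≤ C * ‖(f : l2 V)‖}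

theorem isLeast_shiftBounds (h : ⨆ u, T.childWeight lam u < ⊤) :
    IsLeast (shiftBounds T lam) √(⨆ u, T.childWeight lam u).toReal := by
  refine ⟨⟨Real.sqrt_nonneg _, norm_shift_le T lam h⟩, fun C ⟨hC0, hC⟩ => ?_⟩
  refine Real.sqrt_le_iff.2 ⟨hC0, ENNReal.toReal_le_of_le_ofReal (sq_nonneg C) ?_⟩
  exact iSup_childWeight_le_of_norm_shift_le T lam (shift_domain_eq_top T lam h) hC

end shift

/-- `S_λ` is a bounded operator defined on all of `ℓ²(V)` iff
`α = sup_u ∑_{v ∈ Chi(u)} |λ_v|² < ∞`, and in that case `‖S_λ‖² = α`. -/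
theorem shift_bounded_iff {V : Type*} (T : DirectedTree V) (lam : V → ℂ) :
    (((shift T lam).domain = ⊤ ∧
        ∃ C : ℝ, ∀ f : (shift T lam).domain, ‖shift T lam f‖ ≤ C * ‖(f : l2 V)‖) ↔
      (⨆ u : V, ∑' v : T.chi u, (‖lam (v : V)‖₊ : ℝ≥0∞) ^ 2) < ⊤) ∧
    ((⨆ u : V, ∑' v : T.chi u, (‖lam (v : V)‖₊ : ℝ≥0∞) ^ 2) < ⊤ →
      sInf {C : ℝ | 0 ≤ C ∧
          ∀ f : (shift T lam).domain, ‖shift T lam f‖ ≤ C * ‖(f : l2 V)‖} ^ 2 =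
        (⨆ u : V, ∑' v : T.chi u, (‖lam (v : V)‖₊ : ℝ≥0∞) ^ 2).toReal) := by
  change (_ ↔ ⨆ u, T.childWeight lam u < ⊤) ∧
    (⨆ u, T.childWeight lam u < ⊤ →
      sInf (shiftBounds T lam) ^ 2 = (⨆ u, T.childWeight lam u).toReal)
  refine ⟨⟨fun ⟨hdom, C, hC⟩ => ?_, fun h => ?_⟩, fun h => ?_⟩
  · exact (iSup_childWeight_le_of_norm_shift_le T lam hdom hC).trans_lt ENNReal.ofReal_lt_top
  · exact ⟨shift_domain_eq_top T lam h, _, norm_shift_le T lam h⟩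
  · rw [(isLeast_shiftBounds T lam h).csInf_eq, Real.sq_sqrt ENNReal.toReal_nonneg]
end

section
/- Let S_λ be a weighted shift on a directed tree T = (V,E) with weights {λ_v}_{v∈V°}. Then S_λ is injective if and only if T is leafless (every vertex has at least one child) and Σ_{v child of u} |λ_v|² > 0 for every u ∈ V. -/
open scoped ENNReal ComplexConjugate Classical

variable {V : Type*}

theorem DirectedTree.par_eq {V : Type*} (T : DirectedTree V) {u v : V} (h : T.E u v) :
    T.par v = u :=
  T.parent_unique (T.par_spec ⟨u, h⟩) h

theorem shift_apply_coe {V : Type*} (T : DirectedTree V) (lam : V → ℂ)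
    (f : (shift T lam).domain) : ⇑(shift T lam f) = lamMap T lam ⇑(f : l2 V) := rfl

theorem sum_pos_iff {V : Type*} (T : DirectedTree V) (lam : V → ℂ) (u : V) :
    0 < ∑' v : T.chi u, (‖lam (v : V)‖₊ : ℝ≥0∞) ^ 2 ↔
      ∃ v ∈ T.chi u, lam v ≠ 0 := by
  rw [pos_iff_ne_zero, Ne, ENNReal.tsum_eq_zero]
  constructor
  · intro h
    by_contra hc
    push_neg at hc
    exact h (fun v => by simp [hc v v.2])
  · rintro ⟨v, hv, hne⟩ h
    have := h ⟨v, hv⟩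
    simp only [pow_eq_zero_iff, ENNReal.coe_eq_zero, nnnorm_eq_zero] at this
    exact hne (by simpa using this)

/-- `S_λ` is injective iff `T` is leafless and
`∑_{v ∈ Chi(u)} |λ_v|² > 0` for every `u`. -/
theorem shift_injective_iff {V : Type*} (T : DirectedTree V) (lam : V → ℂ) :
    (Function.Injective fun f : (shift T lam).domain => shift T lam f) ↔
      (∀ u : V, (T.chi u).Nonempty) ∧
        ∀ u : V, 0 < ∑' v : T.chi u, (‖lam (v : V)‖₊ : ℝ≥0∞) ^ 2 := by
  constructor
  · intro hinj
    have key : ∀ u : V, ∃ v ∈ T.chi u, lam v ≠ 0 := by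
      intro u
      by_contra hc
      push_neg at hc
      -- then lamMap T lam (evec u) = 0, so evec u ∈ domain and is in the kernel
      have hzero : lamMap T lam ⇑(evec u) = 0 := by
        funext v
        simp only [lamMap, Pi.zero_apply]
        split_ifs with h
        · rcases h with ⟨w, hw⟩
          by_cases hpar : T.par v = u
          · have : v ∈ T.chi u := by
              rw [← hpar]; exact T.par_spec ⟨w, hw⟩
            rw [hc v this, zero_mul]
          · rw [evec, lp.single_apply_ne 2 u 1 hpar, mul_zero]
        · rfl
      have hmem : evec u ∈ (shift T lam).domain := by
        show Memℓp (lamMap T lam ⇑(evec u)) 2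
        rw [hzero]; exact zero_memℓp
      have h0 : (0 : l2 V) ∈ (shift T lam).domain := (shift T lam).domain.zero_mem
      have heq : shift T lam ⟨evec u, hmem⟩ = shift T lam ⟨0, h0⟩ := by
        apply lp.ext
        rw [shift_apply_coe, shift_apply_coe, hzero]
        funext v
        simp [lamMap]
      have := hinj heq
      have : evec u = 0 := congrArg Subtype.val this
      have h1 : (evec u : V → ℂ) u = 1 := lp.single_apply_self 2 u 1
      rw [this] at h1
      simp at h1
    refine ⟨fun u => ?_, fun u => (sum_pos_iff T lam u).mpr (key u)⟩
    obtain ⟨v, hv, _⟩ := key u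
    exact ⟨v, hv⟩
  · rintro ⟨-, hsum⟩ f g hfg
    have hfg' : lamMap T lam ⇑(f : l2 V) = lamMap T lam ⇑(g : l2 V) := by
      have h1 : shift T lam f = shift T lam g := hfg
      exact congrArg (fun x : l2 V => ⇑x) h1
    apply Subtype.ext
    apply lp.ext
    funext u
    obtain ⟨v, hv, hne⟩ := (sum_pos_iff T lam u).mp (hsum u)
    have hp : T.HasParent v := ⟨u, hv⟩
    have hpar : T.par v = u := T.par_eq hv
    have := congrFun hfg' v
    simp only [lamMap, if_pos hp, hpar] at this
    exact mul_left_cancel₀ hne this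
end

section
/- Let S_λ be a formally normal weighted shift on a directed tree T with weights {λ_v}_{v∈V°}. Then for every u ∈ V° with ‖S_λ e_u‖ > 0, one has ‖S_λ e_u‖ = |λ_u|, λ_u ≠ 0, and λ_v = 0 for every sibling v of u (every v ∈ Chi(parent(u)) with v ≠ u); in particular ‖S_λ e_{parent(u)}‖ = ‖S_λ e_u‖ > 0. -/
open scoped ENNReal ComplexConjugate Classical

variable {V : Type*}

/-! The adjoint of a weighted shift sends `e_u` to `conj λ_u • e_{par u}`, so formal normality
gives `‖S e_u‖ = |λ_u|`. By polarization formal normality also gives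
`⟪S* e_u, S* e_v⟫ = ⟪S e_u, S e_v⟫`, and density of the domain puts every `e_v` in it. For
distinct siblings `u, v` the right side vanishes (disjoint children) while the left side is
`λ_u * conj λ_v`. Hence only `u` among the children of `par u` carries a nonzero weight, and
`S e_{par u} = λ_u • e_u`. -/

open scoped InnerProductSpace

theorem inner_map_map_eq_of_norm_map_eq {E F G : Type*} [AddCommGroup E] [Module ℂ E]
    [NormedAddCommGroup F] [InnerProductSpace ℂ F] [NormedAddCommGroup G] [InnerProductSpace ℂ G]
    {f : E →ₗ[ℂ] F} {g : E →ₗ[ℂ] G} (h : ∀ x, ‖f x‖ = ‖g x‖) (x y : E) :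
    ⟪f x, f y⟫_ℂ = ⟪g x, g y⟫_ℂ := by
  simp only [inner_eq_sum_norm_sq_div_four, ← map_add, ← map_sub, ← map_smul, h]

namespace FormallyNormal

variable {H : Type*} [NormedAddCommGroup H] [InnerProductSpace ℂ H] [CompleteSpace H]
  {A : H →ₗ.[ℂ] H}

theorem inner_adjoint_apply (hA : FormallyNormal A) (x y : A.domain) :
    ⟪A.adjoint (Submodule.inclusion hA.2.1 x), A.adjoint (Submodule.inclusion hA.2.1 y)⟫_ℂ =
      ⟪A x, A y⟫_ℂ :=
  inner_map_map_eq_of_norm_map_eq (f := A.adjoint.toFun.comp (Submodule.inclusion hA.2.1))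
    (g := A.toFun) (fun x => hA.2.2 x x.2 _) x y

end FormallyNormal

theorem DirectedTree.par_eq_of_E_s8 (T : DirectedTree V) {u v : V} (h : T.E u v) : T.par v = u :=
  T.parent_unique (T.par_spec ⟨u, h⟩) h

theorem evec_apply (u v : V) : evec u v = if v = u then 1 else 0 := by
  simp [evec, Pi.single_apply]

theorem norm_evec (u : V) : ‖evec u‖ = 1 := by
  simp [evec, lp.norm_single]

theorem inner_evec_left (u : V) (f : l2 V) : ⟪evec u, f⟫_ℂ = f u := by
  simp [evec, lp.inner_single_left]

section Shift

variable (T : DirectedTree V) (lam : V → ℂ)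

theorem lamMap_evec_apply (u c : V) : lamMap T lam (evec u) c = if T.E u c then lam c else 0 := by
  by_cases hc : T.HasParent c
  · have : T.par c = u ↔ T.E u c := ⟨(· ▸ T.par_spec hc), T.par_eq_of_E_s8⟩
    simp [lamMap, hc, evec_apply, this]
  · have : ¬T.E u c := fun h => hc ⟨u, h⟩
    simp [lamMap, hc, this]

theorem shift_evec_apply {u : V} (h : evec u ∈ (shift T lam).domain) (c : V) :
    shift T lam ⟨evec u, h⟩ c = if T.E u c then lam c else 0 :=
  lamMap_evec_apply T lam u c

theorem evec_mem_shift_domain (hd : Dense ((shift T lam).domain : Set (l2 V))) (v : V) :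
    evec v ∈ (shift T lam).domain := by
  have hcont : Continuous fun f : l2 V => f v :=
    (continuous_apply v).comp lp.uniformContinuous_coe.continuous
  obtain ⟨g, hg, hgv : g v ≠ 0⟩ :=
    hd.exists_mem_open (isOpen_ne_fun hcont (continuous_const (y := 0))) ⟨evec v, by simp [evec_apply]⟩
  -- on the children of `v`, `Λ e_v` is `Λ g` rescaled by `(g v)⁻¹`, and it vanishes elsewhere
  refine (Memℓp.const_smul hg (g v)⁻¹).mono' fun c => ?_
  show ‖lamMap T lam (evec v) c‖ ≤ ‖(g v)⁻¹ * lamMap T lam g c‖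
  rw [lamMap_evec_apply]
  split_ifs with hvc
  · have hc : T.HasParent c := ⟨v, hvc⟩
    rw [lamMap, if_pos hc, T.par_eq_of_E_s8 hvc, mul_left_comm, inv_mul_cancel₀ hgv, mul_one]
  · exact norm_zero.trans_le (norm_nonneg _)

theorem adjoint_shift_evec (hd : Dense ((shift T lam).domain : Set (l2 V))) {u : V}
    (hu : T.HasParent u) (h : evec u ∈ (shift T lam).adjoint.domain) :
    (shift T lam).adjoint ⟨evec u, h⟩ = conj (lam u) • evec (T.par u) := by
  refine LinearPMap.adjoint_apply_eq hd _ fun x => ?_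
  rw [inner_smul_left, inner_evec_left, inner_evec_left]
  show _ = lamMap T lam x u
  simp [lamMap, hu]

theorem inner_shift_evec_eq_zero {u v : V} (huv : u ≠ v) (hu : evec u ∈ (shift T lam).domain)
    (hv : evec v ∈ (shift T lam).domain) :
    ⟪shift T lam ⟨evec u, hu⟩, shift T lam ⟨evec v, hv⟩⟫_ℂ = 0 := by
  -- `S e_u` and `S e_v` are supported on the children of `u` and of `v`, which are disjoint
  have hterm (c : V) : ⟪shift T lam ⟨evec u, hu⟩ c, shift T lam ⟨evec v, hv⟩ c⟫_ℂ = 0 := by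
    rw [shift_evec_apply, shift_evec_apply]
    by_cases huc : T.E u c
    · have hvc : ¬T.E v c := fun hvc => huv (T.parent_unique huc hvc)
      simp [huc, hvc]
    · simp [huc]
  rw [lp.inner_eq_tsum, tsum_congr hterm, tsum_zero]

theorem shift_evec_eq_smul_evec {u w : V} (hwu : T.E w u)
    (hsib : ∀ v ∈ T.chi w, v ≠ u → lam v = 0) (hw : evec w ∈ (shift T lam).domain) :
    shift T lam ⟨evec w, hw⟩ = lam u • evec u := by
  ext c
  rw [shift_evec_apply, lp.coeFn_smul, Pi.smul_apply, evec_apply]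
  by_cases hcu : c = u
  · simp [hcu, hwu]
  · by_cases hwc : T.E w c
    · simp [hcu, hwc, hsib c hwc hcu]
    · simp [hcu, hwc]

variable {T lam}

theorem FormallyNormal.norm_shift_evec (hfn : FormallyNormal (shift T lam)) {u : V}
    (hu : T.HasParent u) (h : evec u ∈ (shift T lam).domain) :
    ‖shift T lam ⟨evec u, h⟩‖ = ‖lam u‖ := by
  rw [← hfn.2.2 _ h (hfn.2.1 h), adjoint_shift_evec T lam hfn.1 hu, norm_smul, norm_evec,
    mul_one, Complex.norm_conj]

theorem FormallyNormal.shift_weight_eq_zero_or_of_siblings (hfn : FormallyNormal (shift T lam))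
    {u v w : V} (hwu : T.E w u) (hwv : T.E w v) (huv : u ≠ v) : lam u = 0 ∨ lam v = 0 := by
  have hu := evec_mem_shift_domain T lam hfn.1 u
  have hv := evec_mem_shift_domain T lam hfn.1 v
  have key := hfn.inner_adjoint_apply ⟨evec u, hu⟩ ⟨evec v, hv⟩
  simp only [Submodule.inclusion_apply] at key
  rw [inner_shift_evec_eq_zero T lam huv, adjoint_shift_evec T lam hfn.1 ⟨w, hwu⟩,
    adjoint_shift_evec T lam hfn.1 ⟨w, hwv⟩, T.par_eq_of_E_s8 hwu, T.par_eq_of_E_s8 hwv,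
    inner_smul_left, inner_smul_right, inner_evec_left, evec_apply] at key
  simpa using key

end Shift

/-- for a formally normal weighted shift, if `u ∈ V°` and `‖S_λ e_u‖ > 0`,
then `‖S_λ e_u‖ = |λ_u|`, `λ_u ≠ 0`, all siblings of `u` carry zero weight, and
`‖S_λ e_{par(u)}‖ = ‖S_λ e_u‖ > 0`. -/
theorem formallyNormal_local_structure {V : Type*} (T : DirectedTree V) (lam : V → ℂ)
    (hfn : FormallyNormal (shift T lam)) (u : V) (hu : T.HasParent u)
    (hmem : evec u ∈ (shift T lam).domain)
    (hpos : 0 < ‖shift T lam ⟨evec u, hmem⟩‖) :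
    ‖shift T lam ⟨evec u, hmem⟩‖ = ‖lam u‖ ∧
    lam u ≠ 0 ∧
    (∀ v : V, v ∈ T.chi (T.par u) → v ≠ u → lam v = 0) ∧
    ∀ hp : evec (T.par u) ∈ (shift T lam).domain,
      ‖shift T lam ⟨evec (T.par u), hp⟩‖ = ‖shift T lam ⟨evec u, hmem⟩‖ ∧
      0 < ‖shift T lam ⟨evec (T.par u), hp⟩‖ := by
  have hnorm := hfn.norm_shift_evec hu hmem
  have hlam : lam u ≠ 0 := norm_pos_iff.1 (hnorm ▸ hpos)
  have hsib : ∀ v ∈ T.chi (T.par u), v ≠ u → lam v = 0 := fun v hv hvu =>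
    (hfn.shift_weight_eq_zero_or_of_siblings (T.par_spec hu) hv hvu.symm).resolve_left hlam
  refine ⟨hnorm, hlam, hsib, fun hp => ?_⟩
  have hpar : ‖shift T lam ⟨evec (T.par u), hp⟩‖ = ‖shift T lam ⟨evec u, hmem⟩‖ := by
    rw [shift_evec_eq_smul_evec T lam (T.par_spec hu) hsib, norm_smul, norm_evec, mul_one, hnorm]
  exact ⟨hpar, hpar ▸ hpos⟩
end

section
/- Let S_λ be a nonzero weighted shift on a directed tree T = (V,E) with weights {λ_v}_{v∈V°}. Suppose there exists a two-sided sequence {u_n}_{n∈ℤ} ⊆ V with u_{n-1} = parent(u_n) and |λ_{u_{n-1}}| = |λ_{u_n}| for all n ∈ ℤ, and λ_v = 0 for all v ∈ V \ {u_n : n ∈ ℤ}. Then S_λ is a bounded normal operator on ℓ²(V). -/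
open scoped ENNReal ComplexConjugate Classical

variable {V : Type*}

/-!
Since `T` has no circuits, the path `u` is injective, so `u n ↦ u (n - 1)` extends by the
identity to a permutation `σ` of `V`. As `λ` vanishes off the path and `par (u n) = u (n - 1)`,
`S_λ f = λ · (f ∘ σ)`: a weighted composition operator, bounded because `|λ|` is constant on the
path. Its adjoint is `f ↦ (conj λ ∘ σ⁻¹) · (f ∘ σ⁻¹)`, so `S*S` and `SS*` are the multiplications
by `|λ ∘ σ⁻¹|²` and `|λ|²`, which agree because `|λ ∘ σ| = |λ|`.
-/

open scoped NNReal

namespace l2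

variable {ι : Type*} (σ : Equiv.Perm ι) {w : ι → ℂ} {c : ℝ≥0}

lemma norm_mul_sq_le (hw : ∀ i, ‖w i‖ ≤ c) (z : ℂ) (i : ι) :
    ‖w i * z‖ ^ 2 ≤ c ^ 2 * ‖z‖ ^ 2 := by
  rw [norm_mul, mul_pow]
  gcongr
  exact hw i

lemma summable_norm_sq_of_memℓp {f : ι → ℂ} (hf : Memℓp f 2) :
    Summable fun i => ‖f i‖ ^ 2 := by
  simpa using hf.summable (by norm_num : 0 < (2 : ℝ≥0∞).toReal)

lemma tsum_norm_sq (f : l2 ι) : ∑' i, ‖f i‖ ^ 2 = ‖f‖ ^ 2 := by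
  simpa using (lp.norm_rpow_eq_tsum (by norm_num : 0 < (2 : ℝ≥0∞).toReal) f).symm

lemma summable_norm_sq_comp (f : l2 ι) : Summable fun i => ‖f (σ i)‖ ^ 2 :=
  σ.summable_iff.mpr (summable_norm_sq_of_memℓp (lp.memℓp f))

lemma memℓp_mul_comp (hw : ∀ i, ‖w i‖ ≤ c) (f : l2 ι) :
    Memℓp (fun i => w i * f (σ i)) 2 := by
  apply memℓp_gen
  simp only [ENNReal.toReal_ofNat, Real.rpow_two]
  exact .of_nonneg_of_le (fun _ => by positivity) (fun i => norm_mul_sq_le hw _ i)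
    ((summable_norm_sq_comp σ f).mul_left _)

lemma norm_mul_comp_le (hw : ∀ i, ‖w i‖ ≤ c) (f : l2 ι) :
    ‖(⟨_, memℓp_mul_comp σ hw f⟩ : l2 ι)‖ ≤ c * ‖f‖ := by
  refine lp.norm_le_of_tsum_le (by norm_num) (by positivity) ?_
  simp only [ENNReal.toReal_ofNat, Real.rpow_two, mul_pow]
  calc ∑' i, ‖w i * f (σ i)‖ ^ (2 : ℕ) ≤ ∑' i, c ^ 2 * ‖f (σ i)‖ ^ 2 :=
        (summable_norm_sq_of_memℓp (memℓp_mul_comp σ hw f)).tsum_le_tsum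
          (fun i => norm_mul_sq_le hw _ i)
          ((summable_norm_sq_comp σ f).mul_left _)
    _ = c ^ 2 * ‖f‖ ^ 2 := by
        rw [tsum_mul_left, σ.tsum_eq (fun i => ‖f i‖ ^ 2), tsum_norm_sq]

noncomputable def weightedComp (hw : ∀ i, ‖w i‖ ≤ c) : l2 ι →L[ℂ] l2 ι :=
  LinearMap.mkContinuous
    { toFun := fun f => ⟨fun i => w i * f (σ i), memℓp_mul_comp σ hw f⟩
      map_add' := fun _ _ => lp.ext <| funext fun _ => mul_add _ _ _
      map_smul' := fun _ _ => lp.ext <| funext fun _ => mul_left_comm _ _ _ }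
    c (norm_mul_comp_le σ hw)

@[simp]
lemma weightedComp_apply (hw : ∀ i, ‖w i‖ ≤ c) (f : l2 ι) (i : ι) :
    weightedComp σ hw f i = w i * f (σ i) := rfl

theorem adjoint_weightedComp (hw : ∀ i, ‖w i‖ ≤ c) (hw' : ∀ i, ‖conj (w (σ.symm i))‖ ≤ c) :
    ContinuousLinearMap.adjoint (weightedComp σ hw) = weightedComp σ.symm hw' := by
  refine ((ContinuousLinearMap.eq_adjoint_iff _ _).mpr fun f g => ?_).symm
  simp only [lp.inner_eq_tsum, weightedComp_apply, RCLike.inner_apply]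
  refine .trans ?_ (σ.symm.tsum_eq _)
  refine tsum_congr fun i => ?_
  simp only [Equiv.apply_symm_apply, map_mul, Complex.conj_conj]
  ring

theorem isStarNormal_weightedComp (hw : ∀ i, ‖w i‖ ≤ c) (hσ : ∀ i, ‖w (σ i)‖ = ‖w i‖) :
    IsStarNormal (weightedComp σ hw) := by
  have hw' (i : ι) : ‖conj (w (σ.symm i))‖ ≤ c := by simpa using hw (σ.symm i)
  refine ⟨?_⟩
  rw [ContinuousLinearMap.star_eq_adjoint, adjoint_weightedComp σ hw hw', commute_iff_eq]
  ext f i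
  have hsq : conj (w (σ.symm i)) * w (σ.symm i) = w i * conj (w i) := by
    rw [Complex.conj_mul', Complex.mul_conj', ← hσ (σ.symm i), Equiv.apply_symm_apply]
  simp only [mul_apply_eq_comp, weightedComp_apply, Equiv.apply_symm_apply,
    Equiv.symm_apply_apply]
  rw [← mul_assoc, hsq, mul_assoc]

end l2

lemma Int.apply_eq_apply_zero_of_apply_sub_one {α : Type*} {a : ℤ → α}
    (ha : ∀ n, a (n - 1) = a n) (n : ℤ) : a n = a 0 := by
  induction n using Int.induction_on with
  | zero => rfl
  | succ k ih => rw [← ih, ← ha (k + 1), add_sub_cancel_right]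
  | pred k ih => rw [← ih, ha]

namespace Equiv.Perm

variable {V : Type*} {u : ℤ → V}

noncomputable def shiftAlong (hu : Function.Injective u) : Equiv.Perm V :=
  ofSubtype ((Equiv.ofInjective u hu).permCongr (Equiv.addRight (-1)))

lemma shiftAlong_apply (hu : Function.Injective u) (n : ℤ) : shiftAlong hu (u n) = u (n - 1) := by
  rw [shiftAlong, ofSubtype_apply_of_mem _ (Set.mem_range_self n)]
  simp [sub_eq_add_neg]

lemma shiftAlong_apply_of_notMem (hu : Function.Injective u) {v : V} (hv : v ∉ Set.range u) :
    shiftAlong hu v = v :=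
  ofSubtype_apply_of_not_mem _ hv

end Equiv.Perm

namespace DirectedTree

variable {V : Type*} (T : DirectedTree V) {u : ℤ → V}

lemma transGen_of_lt (hedge : ∀ n, T.E (u (n - 1)) (u n)) {m n : ℤ} (hmn : m < n) :
    Relation.TransGen T.E (u m) (u n) := by
  induction n, hmn using Int.leInduction with
  | base => exact .single (by simpa using hedge (m + 1))
  | succ k _ ih => exact ih.tail (by simpa using hedge (k + 1))

lemma injective_of_path (hedge : ∀ n, T.E (u (n - 1)) (u n)) : Function.Injective u := by
  intro m n h
  by_contra hne
  rcases lt_or_gt_of_ne hne with hlt | hlt <;>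
    exact T.no_circuit _ (h ▸ T.transGen_of_lt hedge hlt)

lemma par_of_path (hedge : ∀ n, T.E (u (n - 1)) (u n)) (n : ℤ) : T.par (u n) = u (n - 1) :=
  T.parent_unique (T.par_spec ⟨_, hedge n⟩) (hedge n)

end DirectedTree

section PathWeights

variable {V : Type*} (T : DirectedTree V) {lam : V → ℂ} {u : ℤ → V}

lemma lamMap_eq_mul_shiftAlong (hedge : ∀ n, T.E (u (n - 1)) (u n))
    (hzero : ∀ v, (∀ n, v ≠ u n) → lam v = 0) (f : V → ℂ) :
    lamMap T lam f = fun v => lam v * f (Equiv.Perm.shiftAlong (T.injective_of_path hedge) v) := by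
  funext v
  by_cases hv : v ∈ Set.range u
  · obtain ⟨n, rfl⟩ := hv
    rw [lamMap, if_pos ⟨_, hedge n⟩, T.par_of_path hedge, Equiv.Perm.shiftAlong_apply]
  · rw [lamMap, hzero v fun n hn => hv ⟨n, hn.symm⟩]
    simp

lemma shift_domain_eq_top_of_lamMap_eq {N : l2 V →L[ℂ] l2 V}
    (hN : ∀ f : l2 V, lamMap T lam f = N f) : (shift T lam).domain = ⊤ :=
  eq_top_iff.mpr fun f _ => show Memℓp (lamMap T lam f) 2 from hN f ▸ (N f).2

lemma apply_eq_shift_of_lamMap_eq {N : l2 V →L[ℂ] l2 V}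
    (hN : ∀ f : l2 V, lamMap T lam f = N f) (f : (shift T lam).domain) :
    N f = shift T lam f :=
  lp.ext (hN f).symm

end PathWeights

theorem shift_normal_of_path_weights_general {V : Type*} (T : DirectedTree V) (lam : V → ℂ)
    (u : ℤ → V)
    (hedge : ∀ n : ℤ, T.E (u (n - 1)) (u n))
    (habs : ∀ n : ℤ, ‖lam (u (n - 1))‖ = ‖lam (u n)‖)
    (hzero : ∀ v : V, (∀ n : ℤ, v ≠ u n) → lam v = 0) :
    (shift T lam).domain = ⊤ ∧
    ∃ N : l2 V →L[ℂ] l2 V,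
      (∀ f : (shift T lam).domain, N (f : l2 V) = shift T lam f) ∧ IsStarNormal N := by
  set σ := Equiv.Perm.shiftAlong (T.injective_of_path hedge)
  have hbound (v : V) : ‖lam v‖ ≤ ‖lam (u 0)‖₊ := by
    by_cases hv : v ∈ Set.range u
    · obtain ⟨n, rfl⟩ := hv
      exact (Int.apply_eq_apply_zero_of_apply_sub_one (a := fun n => ‖lam (u n)‖) habs n).le
    · simp [hzero v fun n hn => hv ⟨n, hn.symm⟩]
  have hσ (v : V) : ‖lam (σ v)‖ = ‖lam v‖ := by
    by_cases hv : v ∈ Set.range u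
    · obtain ⟨n, rfl⟩ := hv
      rw [Equiv.Perm.shiftAlong_apply, habs]
    · rw [Equiv.Perm.shiftAlong_apply_of_notMem _ hv]
  have hN (f : l2 V) : lamMap T lam f = l2.weightedComp σ hbound f :=
    lamMap_eq_mul_shiftAlong T hedge hzero f
  exact ⟨shift_domain_eq_top_of_lamMap_eq T hN, _, apply_eq_shift_of_lamMap_eq T hN,
    l2.isStarNormal_weightedComp σ hbound hσ⟩

/-- if the weights of a nonzero weighted shift are supported on a two-sided
path with constant modulus, then `S_λ` is a bounded normal operator on `ℓ²(V)`. -/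
theorem shift_normal_of_path_weights {V : Type*} (T : DirectedTree V) (lam : V → ℂ)
    (hnz : ∃ f : (shift T lam).domain, shift T lam f ≠ 0)
    (u : ℤ → V)
    (hedge : ∀ n : ℤ, T.E (u (n - 1)) (u n))
    (habs : ∀ n : ℤ, ‖lam (u (n - 1))‖ = ‖lam (u n)‖)
    (hzero : ∀ v : V, (∀ n : ℤ, v ≠ u n) → lam v = 0) :
    (shift T lam).domain = ⊤ ∧
    ∃ N : l2 V →L[ℂ] l2 V,
      (∀ f : (shift T lam).domain, N (f : l2 V) = shift T lam f) ∧ IsStarNormal N :=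
  shift_normal_of_path_weights_general T lam u hedge habs hzero
end
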